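/- For integers n, m with |n|, |m| ≥ 2, the elements b and a^{-1} b a of BS(n,m) generate a subgroup isomorphic to the amalgamated free product ℤ *_{ℤ} ℤ where the amalgamated subgroup embeds as nℤ in the first factor and mℤ in the second factor. -/

import Mathlib

/-- Relations of the Baumslag–Solitar group `BS(n,m) = ⟨a,b | a bⁿ a⁻¹ = bᵐ⟩`,
with `a` corresponding to `true` and `b` to `false`. -/
def BSRels (n m : ℤ) : Set (FreeGroup Bool) :=
  {FreeGroup.of true * FreeGroup.of false ^ n * (FreeGroup.of true)⁻¹ *
    (FreeGroup.of false ^ m)⁻¹}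

/-- The Baumslag–Solitar group `BS(n,m)`. -/
abbrev BS (n m : ℤ) : Type := PresentedGroup (BSRels n m)

/-- The generator `a` of `BS(n,m)`. -/
def BS.a (n m : ℤ) : BS n m := PresentedGroup.of true

/-- The generator `b` of `BS(n,m)`. -/
def BS.b (n m : ℤ) : BS n m := PresentedGroup.of false

open Monoid

/-- The maps of the amalgam `ℤ *_ℤ ℤ`: the base copy of `ℤ` embeds as `nℤ` in the first
factor and as `mℤ` in the second factor. -/
def bsAmalgamMaps (n m : ℤ) : ∀ _ : Bool, (Multiplicative ℤ →* Multiplicative ℤ) :=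
  fun i => if i then zpowGroupHom n else zpowGroupHom m

/-! `BS(n,m)` maps to the HNN extension of `ℤ = ⟨b⟩` in which the stable letter `t` (the image
of `a`) conjugates `nℤ` onto `mℤ`, so it suffices that the amalgam embeds there via `x ↦ b`,
`y ↦ t⁻¹ b t`. This holds for any amalgam `G *_H G` with injective edge maps: a reduced amalgam
word `g₀ (t⁻¹ h₁ t) g₁ (t⁻¹ h₂ t) ⋯`, with every `hᵢ` outside the second copy of `H` and every
inner `gᵢ` outside the first, is already reduced in the HNN extension. By Britton's lemma it lies
in `G` only if it contains no `t`, that is, only if it is a single letter of the first factor. -/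

namespace Monoid.PushoutI

variable {ι H K : Type*} {G : ι → Type*} [Group H] [∀ i, Group (G i)] [Group K]
  {φ : ∀ i, H →* G i}

theorem NormalWord.reduced {d : NormalWord.Transversal φ} (w : NormalWord d) :
    Reduced φ w.toWord := by
  rintro ⟨i, g⟩ hg hgr
  have hcompl := d.compl i
  have h1 := hcompl.equiv_fst_eq_self_of_mem_of_one_mem (d.one_mem i) hgr
  have h2 := hcompl.equiv_fst_eq_one_of_mem_of_one_mem (one_mem _) (w.normalized i g hg)
  exact w.ne_one _ hg (congrArg Subtype.val (h1.symm.trans h2))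

theorem exists_reduced_eq_base_mul_ofCoprodI (hφ : ∀ i, Function.Injective (φ i))
    (x : PushoutI φ) :
    ∃ (h : H) (w : CoprodI.Word G), Reduced φ w ∧ x = base φ h * ofCoprodI w.prod := by
  classical
  obtain ⟨d⟩ := NormalWord.transversal_nonempty φ hφ
  let w := NormalWord.equiv (d := d) x
  exact ⟨w.head, w.toWord, w.reduced, (NormalWord.equiv.symm_apply_apply x).symm⟩

theorem ofCoprodI_prod_mem_range_of {i : ι} (w : CoprodI.Word G)
    (hw : ∀ p ∈ w.toList, p.1 = i) :
    ofCoprodI w.prod ∈ (of (φ := φ) i).range := by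
  rw [CoprodI.Word.prod, map_list_prod, List.map_map]
  refine Subgroup.list_prod_mem _ fun y hy => ?_
  obtain ⟨⟨j, g⟩, hp, rfl⟩ := List.mem_map.1 hy
  obtain rfl : j = i := hw _ hp
  exact ⟨g, (ofCoprodI_of j g).symm⟩

theorem range_lift [Nonempty ι] (f : ∀ i, G i →* K) (k : H →* K)
    (hf : ∀ i, (f i).comp (φ i) = k) : (lift f k hf).range = ⨆ i, (f i).range := by
  refine le_antisymm ?_ (iSup_le fun i => ?_)
  · rintro _ ⟨x, rfl⟩
    induction x using induction_on with
    | of i g => rw [lift_of]; exact le_iSup (fun i => (f i).range) i ⟨g, rfl⟩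
    | base h =>
      obtain ⟨i⟩ := ‹Nonempty ι›
      rw [lift_base, ← hf i]
      exact le_iSup (fun i => (f i).range) i ⟨φ i h, rfl⟩
    | mul x y hx hy => rw [map_mul]; exact mul_mem hx hy
  · rintro _ ⟨g, rfl⟩
    exact ⟨of i g, lift_of f k hf g⟩

end Monoid.PushoutI

open HNNExtension

section HNNOfPair

variable {G H : Type*} [Group G] [Group H] {φ : Bool → H →* G}
  (hφ : ∀ i, Function.Injective (φ i))

noncomputable def rangeEquivOfInjective : (φ true).range ≃* (φ false).range :=
  (MonoidHom.ofInjective (hφ true)).symm.trans (MonoidHom.ofInjective (hφ false))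

theorem rangeEquivOfInjective_apply (h : H) :
    (rangeEquivOfInjective hφ ⟨φ true h, MonoidHom.mem_range.2 ⟨h, rfl⟩⟩ : G) = φ false h := by
  have h' : (MonoidHom.ofInjective (hφ true)).symm ⟨φ true h, MonoidHom.mem_range.2 ⟨h, rfl⟩⟩ =
      h :=
    hφ true (MonoidHom.apply_ofInjective_symm _ _)
  simp only [rangeEquivOfInjective, MulEquiv.trans_apply, h', MonoidHom.ofInjective_apply]

abbrev HNNOfPair : Type _ :=
  HNNExtension G (φ true).range (φ false).range (rangeEquivOfInjective hφ)

theorem HNNOfPair.t_mul_of_mul_inv_t (h : H) :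
    (t : HNNOfPair hφ) * of (φ true h) * t⁻¹ = of (φ false h) := by
  rw [← rangeEquivOfInjective_apply hφ h, equiv_eq_conj]

theorem HNNOfPair.inv_t_mul_of_mul_t (h : H) :
    (t : HNNOfPair hφ)⁻¹ * of (φ false h) * t = of (φ true h) := by
  rw [← HNNOfPair.t_mul_of_mul_inv_t hφ h]; group

noncomputable def pushoutToHNN : PushoutI φ →* HNNOfPair hφ :=
  PushoutI.lift (fun | true => of | false => (MulAut.conj t⁻¹).toMonoidHom.comp of)
    (of.comp (φ true)) fun
      | true => rfl
      | false => MonoidHom.ext fun h => by simp [HNNOfPair.inv_t_mul_of_mul_t]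

theorem pushoutToHNN_of_true (g : G) :
    pushoutToHNN hφ (PushoutI.of true g) = (of g : HNNOfPair hφ) := by
  simp [pushoutToHNN]

theorem pushoutToHNN_of_false (g : G) :
    pushoutToHNN hφ (PushoutI.of false g) = (t⁻¹ * of g * t : HNNOfPair hφ) := by
  simp [pushoutToHNN]

end HNNOfPair

section HNNWord

variable {G H : Type*} [Group G] [Group H] {φ : Bool → H →* G}

-- `(g, [(u₁, g₁), …, (uₖ, gₖ)])` stands for `g * t ^ u₁ * g₁ * ⋯ * t ^ uₖ * gₖ`, and a letter
-- `⟨false, g⟩` is read as `t⁻¹ * g * t`.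
def hnnWord : List (Σ _ : Bool, G) → G × List (ℤˣ × G)
  | [] => (1, [])
  | ⟨true, g⟩ :: l => (g * (hnnWord l).1, (hnnWord l).2)
  | ⟨false, g⟩ :: l => (1, (-1, g) :: (1, (hnnWord l).1) :: (hnnWord l).2)

theorem of_mul_prod_hnnWord (hφ : ∀ i, Function.Injective (φ i)) (l : List (Σ _ : Bool, G)) :
    (of (hnnWord l).1 : HNNOfPair hφ) *
        ((hnnWord l).2.map fun x => t ^ (x.1 : ℤ) * of x.2).prod =
      (l.map fun p => pushoutToHNN hφ (PushoutI.of p.1 p.2)).prod := by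
  induction l with
  | nil => simp [hnnWord]
  | cons p l ih =>
    obtain ⟨_ | _, g⟩ := p
    · simp [hnnWord, pushoutToHNN_of_false, ← ih, mul_assoc]
    · simp [hnnWord, pushoutToHNN_of_true, ← ih, mul_assoc]

theorem hnnWord_snd_eq_nil {l : List (Σ _ : Bool, G)} (hl : (hnnWord l).2 = []) :
    ∀ p ∈ l, p.1 = true := by
  induction l with
  | nil => simp
  | cons p l ih =>
    obtain ⟨_ | _, g⟩ := p
    · simp [hnnWord] at hl
    · simpa [hnnWord] using ih hl

theorem isChain_hnnWord : ∀ {l : List (Σ _ : Bool, G)},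
    l.IsChain (fun p q => p.1 ≠ q.1) → (∀ p ∈ l, p.2 ∉ (φ p.1).range) →
    (hnnWord l).2.IsChain fun a b =>
      a.2 ∈ toSubgroup (φ true).range (φ false).range a.1 → a.1 = b.1
  | [], _, _ => List.isChain_nil
  | ⟨true, _⟩ :: l, hc, hl =>
    isChain_hnnWord (l := l) hc.tail fun p hp => hl p (List.mem_cons_of_mem _ hp)
  | [⟨false, _⟩], _, hl => by simpa [hnnWord] using hl _ List.mem_cons_self
  | ⟨false, _⟩ :: ⟨false, _⟩ :: _, hc, _ => absurd (List.isChain_cons_cons.1 hc).1 (by simp)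
  | [⟨false, _⟩, ⟨true, _⟩], _, hl => by simpa [hnnWord] using hl _ List.mem_cons_self
  | ⟨false, _⟩ :: ⟨true, _⟩ :: ⟨true, _⟩ :: _, hc, _ =>
    absurd (List.isChain_cons_cons.1 (List.isChain_cons_cons.1 hc).2).1 (by simp)
  | ⟨false, g⟩ :: ⟨true, g'⟩ :: ⟨false, g''⟩ :: l, hc, hl => by
    have htail := isChain_hnnWord (l := ⟨false, g''⟩ :: l) (List.isChain_cons_cons.1 hc).2.tail
      fun p hp => hl p (List.mem_cons_of_mem _ (List.mem_cons_of_mem _ hp))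
    have hg : g ∉ (φ false).range := hl _ List.mem_cons_self
    have hg' : g' ∉ (φ true).range := hl _ (List.mem_cons_of_mem _ List.mem_cons_self)
    simp only [hnnWord, mul_one] at htail ⊢
    exact htail.cons_cons (fun h => absurd h hg') |>.cons_cons fun h => absurd h hg

theorem pushoutToHNN_injective (hφ : ∀ i, Function.Injective (φ i)) :
    Function.Injective (pushoutToHNN hφ) := by
  refine (injective_iff_map_eq_one _).2 fun x hx => ?_
  obtain ⟨h, w, hw, rfl⟩ := PushoutI.exists_reduced_eq_base_mul_ofCoprodI hφ x
  let r : NormalWord.ReducedWord G (φ true).range (φ false).range :=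
    ⟨(hnnWord w.toList).1, (hnnWord w.toList).2, isChain_hnnWord w.chain_ne hw⟩
  have hr :
      r.prod (rangeEquivOfInjective hφ) = pushoutToHNN hφ (PushoutI.ofCoprodI w.prod) := by
    rw [NormalWord.ReducedWord.prod, of_mul_prod_hnnWord, CoprodI.Word.prod, map_list_prod,
      map_list_prod, List.map_map, List.map_map]
    simp only [Function.comp_def, PushoutI.ofCoprodI_of]
  have hbase : pushoutToHNN hφ (PushoutI.base φ h) = of (φ true h) := by
    rw [← PushoutI.of_apply_eq_base φ true, pushoutToHNN_of_true]
  have hnil : (hnnWord w.toList).2 = [] := by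
    refine ReducedWord.toList_eq_nil_of_mem_of_range (rangeEquivOfInjective hφ) r
      ⟨(φ true h)⁻¹, ?_⟩
    rw [hr, map_inv, ← hbase, inv_eq_iff_mul_eq_one, ← map_mul, hx]
  obtain ⟨g, hg⟩ : PushoutI.base φ h * PushoutI.ofCoprodI w.prod ∈ (PushoutI.of true).range :=
    mul_mem ⟨φ true h, PushoutI.of_apply_eq_base φ true h⟩
      (PushoutI.ofCoprodI_prod_mem_range_of w (hnnWord_snd_eq_nil hnil))
  rw [← hg, pushoutToHNN_of_true, ← map_one of] at hx
  rw [← hg, of_injective _ hx, map_one]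

end HNNWord

theorem bsAmalgamMaps_injective {n m : ℤ} (hn : n ≠ 0) (hm : m ≠ 0) :
    ∀ i, Function.Injective (bsAmalgamMaps n m i)
  | true => zpow_left_injective hn
  | false => zpow_left_injective hm

namespace BS

theorem a_mul_b_zpow_mul_a_inv (n m : ℤ) : a n m * b n m ^ n * (a n m)⁻¹ = b n m ^ m := by
  have h : PresentedGroup.mk (BSRels n m) (FreeGroup.of true * FreeGroup.of false ^ n *
      (FreeGroup.of true)⁻¹ * (FreeGroup.of false ^ m)⁻¹) = 1 :=
    (QuotientGroup.eq_one_iff _).2 (Subgroup.subset_normalClosure rfl)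
  simp only [map_mul, map_zpow, map_inv] at h
  exact mul_inv_eq_one.1 h

theorem inv_a_mul_b_zpow_mul_a (n m : ℤ) : (a n m)⁻¹ * b n m ^ m * a n m = b n m ^ n := by
  rw [← a_mul_b_zpow_mul_a_inv]
  group

noncomputable def toHNN {n m : ℤ} (hn : n ≠ 0) (hm : m ≠ 0) :
    BS n m →* HNNOfPair (bsAmalgamMaps_injective hn hm) :=
  PresentedGroup.toGroup (f := fun | true => t | false => of (Multiplicative.ofAdd 1)) <| by
    rintro _ rfl
    have hrel : (t : HNNOfPair (bsAmalgamMaps_injective hn hm)) * of (Multiplicative.ofAdd 1) ^ n *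
        t⁻¹ = of (Multiplicative.ofAdd 1) ^ m := by
      simp only [← map_zpow]
      exact HNNOfPair.t_mul_of_mul_inv_t _ (Multiplicative.ofAdd 1)
    simp only [map_mul, map_inv, map_zpow, FreeGroup.lift_apply_of]
    rw [hrel, mul_inv_cancel]

noncomputable def amalgamHom (n m : ℤ) : PushoutI (bsAmalgamMaps n m) →* BS n m :=
  PushoutI.lift
    (fun | true => zpowersHom _ (b n m) | false => zpowersHom _ ((a n m)⁻¹ * b n m * a n m))
    (zpowersHom _ (b n m ^ n)) fun
    | true => MonoidHom.ext_mint (by simp [bsAmalgamMaps])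
    | false => MonoidHom.ext_mint (by
        have hconj := conj_zpow (a := (a n m)⁻¹) (b := b n m) (i := m)
        rw [inv_inv] at hconj
        simp [bsAmalgamMaps, hconj, inv_a_mul_b_zpow_mul_a])

theorem amalgamHom_of_true (n m : ℤ) :
    amalgamHom n m (PushoutI.of true (Multiplicative.ofAdd 1)) = b n m := by
  simp [amalgamHom]

theorem amalgamHom_of_false (n m : ℤ) :
    amalgamHom n m (PushoutI.of false (Multiplicative.ofAdd 1)) = (a n m)⁻¹ * b n m * a n m := by
  simp [amalgamHom]

theorem range_amalgamHom (n m : ℤ) :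
    (amalgamHom n m).range = Subgroup.closure {b n m, (a n m)⁻¹ * b n m * a n m} := by
  rw [amalgamHom, PushoutI.range_lift, iSup_bool_eq, Set.insert_eq, Subgroup.closure_union]
  exact congrArg₂ (· ⊔ ·) (Subgroup.zpowers_eq_closure (b n m))
    (Subgroup.zpowers_eq_closure ((a n m)⁻¹ * b n m * a n m))

theorem toHNN_comp_amalgamHom {n m : ℤ} (hn : n ≠ 0) (hm : m ≠ 0) :
    (toHNN hn hm).comp (amalgamHom n m) = pushoutToHNN (bsAmalgamMaps_injective hn hm) := by
  refine PushoutI.hom_ext_nonempty fun i => MonoidHom.ext_mint ?_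
  cases i
  · simp [amalgamHom_of_false, pushoutToHNN_of_false, toHNN, a, b]
  · simp [amalgamHom_of_true, pushoutToHNN_of_true, toHNN, b]

end BS

/-- For `|n|,|m| ≥ 2`, the elements `b` and `a⁻¹ b a` of `BS(n,m)` generate a subgroup
isomorphic to `ℤ *_ℤ ℤ` (amalgamated over `nℤ` in the first factor and `mℤ` in the
second), via `x ↦ b`, `y ↦ a⁻¹ b a`. -/
theorem bs_contains_amalgam (n m : ℤ) (hn : 2 ≤ |n|) (hm : 2 ≤ |m|) :
    ∃ f : PushoutI (bsAmalgamMaps n m) →* BS n m,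
      Function.Injective f ∧
      f (PushoutI.of (φ := bsAmalgamMaps n m) true (Multiplicative.ofAdd (1 : ℤ))) =
        BS.b n m ∧
      f (PushoutI.of (φ := bsAmalgamMaps n m) false (Multiplicative.ofAdd (1 : ℤ))) =
        (BS.a n m)⁻¹ * BS.b n m * BS.a n m ∧
      f.range = Subgroup.closure {BS.b n m, (BS.a n m)⁻¹ * BS.b n m * BS.a n m} := by
  have hn0 : n ≠ 0 := by rintro rfl; simp at hn
  have hm0 : m ≠ 0 := by rintro rfl; simp at hm
  have hinj : Function.Injective (BS.toHNN hn0 hm0 ∘ BS.amalgamHom n m) := by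
    rw [← MonoidHom.coe_comp, BS.toHNN_comp_amalgamHom]
    exact pushoutToHNN_injective _
  exact ⟨BS.amalgamHom n m, hinj.of_comp, BS.amalgamHom_of_true n m, BS.amalgamHom_of_false n m,
    BS.range_amalgamHom n m⟩
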